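/- arXiv:1704.04180 — 7 statements merged into one kernel-verified Lean document; each statement's English description precedes it below -/
import Mathlib

section
/- For all real numbers u, v ≥ 0 and r ≥ 2 with 1/r + 1/r' = 1, one has u·v ≤ u^r/r + v^{r'}/r' − (1/r)·|u − v^{1/(r−1)}|^r. -/
/-!
Put `w = v ^ (1 / (r - 1))`, so that `v = w ^ (r - 1)` and `v ^ r' = w ^ r`. After multiplying by `r`
the claim becomes `|u - w| ^ r ≤ u ^ r - (w ^ r + r w ^ (r - 1) (u - w))`: the gap between `x ^ r`
and its tangent line at `w` dominates `|u - w| ^ r`. Along `u = w ± t` both sides vanish at `t = 0`,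
and the `t`-derivative of their difference is `r` times the superadditivity defect of
`x ↦ x ^ (r - 1)`, which is nonnegative because `r - 1 ≥ 1`.
-/

open Real

namespace Real

variable {p w t u : ℝ}

lemma rpow_le_rpow_add_sub_tangent (hp : 2 ≤ p) (hw : 0 ≤ w) (ht : 0 ≤ t) :
    t ^ p ≤ (w + t) ^ p - (w ^ p + p * w ^ (p - 1) * t) := by
  have hp1 : 1 ≤ p - 1 := by linarith
  let f : ℝ → ℝ := fun s ↦ (w + s) ^ p - p * w ^ (p - 1) * s - s ^ p
  have hf : ∀ s, HasDerivAt f (p * ((w + s) ^ (p - 1) - w ^ (p - 1) - s ^ (p - 1))) s := by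
    intro s
    have hpow := ((hasDerivAt_id' s).const_add w).rpow_const (p := p) (Or.inr (by linarith))
    have hlin := (hasDerivAt_id' s).const_mul (p * w ^ (p - 1))
    have hsp := hasDerivAt_rpow_const (x := s) (Or.inr (by linarith : 1 ≤ p))
    exact ((hpow.sub hlin).sub hsp).congr_deriv (by ring)
  have hspo : MonotoneOn f (Set.Ici 0) := by
    refine monotoneOn_of_hasDerivWithinAt_nonneg (convex_Ici 0)
      (fun s _ ↦ (hf s).continuousAt.continuousWithinAt)
      (fun s _ ↦ (hf s).hasDerivWithinAt) fun s hs ↦ ?_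
    rw [interior_Ici, Set.mem_Ioi] at hs
    have := add_rpow_le_rpow_add hw hs.le hp1
    exact mul_nonneg (by linarith) (by linarith)
  have h0 := hspo Set.self_mem_Ici ht ht
  simp only [f, add_zero, mul_zero, sub_zero, zero_rpow (by linarith : p ≠ 0)] at h0
  linarith

lemma rpow_le_rpow_sub_sub_tangent (hp : 2 ≤ p) (ht : 0 ≤ t) (htw : t ≤ w) :
    t ^ p ≤ (w - t) ^ p - (w ^ p - p * w ^ (p - 1) * t) := by
  have hp1 : 1 ≤ p - 1 := by linarith
  let f : ℝ → ℝ := fun s ↦ (w - s) ^ p + p * w ^ (p - 1) * s - s ^ p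
  have hf : ∀ s, HasDerivAt f (p * (w ^ (p - 1) - (w - s) ^ (p - 1) - s ^ (p - 1))) s := by
    intro s
    have hpow := ((hasDerivAt_id' s).const_sub w).rpow_const (p := p) (Or.inr (by linarith))
    have hlin := (hasDerivAt_id' s).const_mul (p * w ^ (p - 1))
    have hsp := hasDerivAt_rpow_const (x := s) (Or.inr (by linarith : 1 ≤ p))
    exact ((hpow.add hlin).sub hsp).congr_deriv (by ring)
  have hspo : MonotoneOn f (Set.Icc 0 w) := by
    refine monotoneOn_of_hasDerivWithinAt_nonneg (convex_Icc 0 w)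
      (fun s _ ↦ (hf s).continuousAt.continuousWithinAt)
      (fun s _ ↦ (hf s).hasDerivWithinAt) fun s hs ↦ ?_
    rw [interior_Icc, Set.mem_Ioo] at hs
    have := add_rpow_le_rpow_add (sub_nonneg.2 hs.2.le) hs.1.le hp1
    rw [sub_add_cancel] at this
    exact mul_nonneg (by linarith) (by linarith)
  have h0 := hspo ⟨le_rfl, ht.trans htw⟩ ⟨ht, htw⟩ ht
  simp only [f, sub_zero, mul_zero, add_zero, zero_rpow (by linarith : p ≠ 0)] at h0
  linarith

lemma abs_sub_rpow_le_rpow_sub_tangent (hp : 2 ≤ p) (hu : 0 ≤ u) (hw : 0 ≤ w) :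
    |u - w| ^ p ≤ u ^ p - (w ^ p + p * w ^ (p - 1) * (u - w)) := by
  rcases le_total w u with hwu | huw
  · have := rpow_le_rpow_add_sub_tangent hp hw (sub_nonneg.2 hwu)
    rw [add_sub_cancel] at this
    rwa [abs_of_nonneg (sub_nonneg.2 hwu)]
  · have := rpow_le_rpow_sub_sub_tangent hp (sub_nonneg.2 huw) (sub_le_self w hu)
    rw [sub_sub_cancel] at this
    rw [abs_sub_comm, abs_of_nonneg (sub_nonneg.2 huw)]
    linarith

end Real

/-- Quantitative Young inequality (Cianchi). -/
theorem quantitative_young (u v r r' : ℝ)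
    (hu : 0 ≤ u) (hv : 0 ≤ v) (hr : 2 ≤ r) (hconj : 1 / r + 1 / r' = 1) :
    u * v ≤ u ^ r / r + v ^ r' / r' - (1 / r) * |u - v ^ (1 / (r - 1))| ^ r := by
  have h : r.HolderConjugate r' :=
    holderConjugate_iff.2 ⟨by linarith, by simpa only [one_div] using hconj⟩
  set w := v ^ (1 / (r - 1))
  have hw : 0 ≤ w := rpow_nonneg hv _
  have hwv : w ^ (r - 1) = v := by
    rw [← rpow_mul hv, one_div_mul_cancel h.sub_one_ne_zero, rpow_one]
  have hwr : w ^ r = v ^ r' := by rw [← rpow_mul hv, h.conjugate_eq, one_div_mul_eq_div]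
  have hw_mul : w ^ (r - 1) * w = w ^ r := by
    rw [← rpow_add_one' hw (by linarith), sub_add_cancel]
  have hgap := abs_sub_rpow_le_rpow_sub_tangent hr hu hw
  rw [← hwr, ← hwv, div_eq_mul_inv (w ^ r), ← h.one_sub_inv]
  field_simp [h.ne_zero]
  linear_combination hgap + r * hw_mul
end

section
/- Let n ≥ 1 be an integer, s ∈ (0,1), and a, b, c, d > 0. Then M_s^0(a,b) · M_s^0(c,d) = M_s^0(ac, bd) ≥ M_s^{−1/n}(ac, bd) · (1 + G), where G = n·min(s,1−s) · (M_s^{1/n}(bd, ac))^{−1/n} · |(bd)^{min(s,1−s)/n} − (ac)^{min(s,1−s)/n}|^{1/min(s,1−s)}. Moreover G = 0 if and only if ac = bd. -/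
open Real

/-- The `r`-mean of two positive reals, `r ≠ 0`. -/
noncomputable def M (s r x y : ℝ) : ℝ := ((1 - s) * x ^ r + s * y ^ r) ^ (1 / r)

/-- The geometric mean `M_s^0`. -/
noncomputable def M0 (s x y : ℝ) : ℝ := x ^ (1 - s) * y ^ s

/-!
Put `x = X ^ n`, `y = Y ^ n`, `A = s X + (1 - s) Y` and `G = X ^ s Y ^ (1 - s)`. Then
`M_s^0(x, y) = (X Y / G) ^ n` and `M_s^{-1/n}(x, y) = (X Y / A) ^ n`, so the inequality asks for
`(A / G) ^ n ≥ 1 + n m E / A`, where `m = min(s, 1 - s)` and `E = |Y ^ m - X ^ m| ^ (1 / m)`.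
By Bernoulli, `(A / G) ^ n ≥ 1 + n (A - G) / A`, and `A - G ≥ m E` is a quantitative weighted
AM-GM inequality. For `s ≤ 1/2` (the other case follows by exchanging `X` and `Y`) and
`p = 1 / s ≥ 2` the latter is homogeneous, and after dividing by `Y` it becomes
`(1 + v) ^ p ≥ 1 + p v + |v| ^ p` for `v ≥ -1`.
-/

section Elementary

variable {p q s v X Y : ℝ}

theorem mul_add_abs_rpow_le_mul_one_add_rpow (hq : 1 ≤ q) (hv : -1 ≤ v) :
    v + |v| ^ (q + 1) ≤ v * (1 + v) ^ q := by
  rcases le_or_gt 0 v with hv0 | hv0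
  · have hsuper : 1 + v ^ q ≤ (1 + v) ^ q := by
      simpa using add_rpow_le_rpow_add zero_le_one hv0 hq
    rw [abs_of_nonneg hv0, rpow_add_one' hv0 (by linarith)]
    nlinarith
  · set w := -v with hw
    have hw0 : 0 ≤ w := by linarith
    have h1 : (1 - w) ^ q ≤ 1 - w := rpow_le_self_of_le_one (by linarith) (by linarith) hq
    have h2 : w ^ q ≤ w := rpow_le_self_of_le_one hw0 (by linarith) hq
    rw [abs_of_neg hv0, ← hw, rpow_add_one' hw0 (by linarith),
      show 1 + v = 1 - w by ring, show v = -w by ring]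
    nlinarith

theorem one_add_mul_add_abs_rpow_le_one_add_rpow (hp : 2 ≤ p) (hv : -1 ≤ v) :
    1 + p * v + |v| ^ p ≤ (1 + v) ^ p := by
  -- `(1 + v) ^ p = (1 + v) ^ (p - 1) + v (1 + v) ^ (p - 1)`: Bernoulli bounds the first summand,
  -- the previous lemma the second.
  have hbernoulli : 1 + (p - 1) * v ≤ (1 + v) ^ (p - 1) :=
    one_add_mul_self_le_rpow_one_add hv (by linarith)
  have hcorrection := mul_add_abs_rpow_le_mul_one_add_rpow (q := p - 1) (by linarith) hv
  rw [sub_add_cancel] at hcorrection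
  calc 1 + p * v + |v| ^ p ≤ (1 + v) ^ (p - 1) * (1 + v) := by nlinarith
    _ = (1 + v) ^ p := by rw [← rpow_add_one' (by linarith) (by linarith), sub_add_cancel]

theorem geom_mean_add_mul_abs_rpow_sub_le_arith_mean (hs : 0 < s) (hs2 : s ≤ 1 / 2)
    (hX : 0 ≤ X) (hY : 0 < Y) :
    X ^ s * Y ^ (1 - s) + s * |Y ^ s - X ^ s| ^ (1 / s) ≤ s * X + (1 - s) * Y := by
  have hXs : 0 ≤ X ^ s := rpow_nonneg hX s
  have hYs : 0 < Y ^ s := rpow_pos_of_pos hY s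
  have hp : 2 ≤ 1 / s := by rw [le_div_iff₀ hs]; linarith
  have hpow : ∀ {Z : ℝ}, 0 ≤ Z → (Z ^ s) ^ (1 / s) = Z := fun hZ => by
    rw [← rpow_mul hZ, mul_one_div_cancel hs.ne', rpow_one]
  have key := one_add_mul_add_abs_rpow_le_one_add_rpow hp
    (v := X ^ s / Y ^ s - 1) (by linarith [div_nonneg hXs hYs.le])
  rw [add_sub_cancel, div_rpow hXs hYs.le, hpow hX, hpow hY.le,
    show X ^ s / Y ^ s - 1 = -((Y ^ s - X ^ s) / Y ^ s) by field_simp; ring, abs_neg, abs_div,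
    abs_of_pos hYs, div_rpow (abs_nonneg _) hYs.le, hpow hY.le] at key
  have hscaled := mul_le_mul_of_nonneg_left key (mul_pos hs hY).le
  rw [← show Y / Y ^ s = Y ^ (1 - s) by rw [rpow_sub hY, rpow_one]]
  field_simp at hscaled ⊢
  linarith

theorem geom_mean_add_min_mul_abs_rpow_sub_le_arith_mean (hs : 0 < s) (hs1 : s < 1)
    (hX : 0 < X) (hY : 0 < Y) :
    X ^ s * Y ^ (1 - s) +
        min s (1 - s) * |Y ^ min s (1 - s) - X ^ min s (1 - s)| ^ (1 / min s (1 - s)) ≤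
      s * X + (1 - s) * Y := by
  rcases le_or_gt s (1 / 2) with hs2 | hs2
  · rw [min_eq_left (by linarith)]
    exact geom_mean_add_mul_abs_rpow_sub_le_arith_mean hs hs2 hX.le hY
  · have := geom_mean_add_mul_abs_rpow_sub_le_arith_mean (s := 1 - s) (by linarith)
      (by linarith) hY.le hX
    rw [sub_sub_cancel, abs_sub_comm] at this
    rw [min_eq_right (by linarith)]
    linarith

theorem one_add_mul_sub_div_le_div_rpow {r A G : ℝ} (hr : 1 ≤ r) (hG : 0 < G) (hGA : G ≤ A) :
    1 + r * ((A - G) / A) ≤ (A / G) ^ r := by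
  have hbernoulli := one_add_mul_self_le_rpow_one_add (s := A / G - 1)
    (by linarith [div_nonneg (hG.le.trans hGA) hG.le]) hr
  rw [add_sub_cancel] at hbernoulli
  have hdiv : (A - G) / A ≤ A / G - 1 := by
    rw [div_sub_one hG.ne']
    exact div_le_div_of_nonneg_left (by linarith) hG hGA
  nlinarith

end Elementary

/-- The correction term of the theorem, with `n` allowed to be any real exponent `r`. -/
noncomputable def holderGap (s r x y : ℝ) : ℝ :=
  r * min s (1 - s) * M s (1 / r) y x ^ (-1 / r) *
    |y ^ (min s (1 - s) / r) - x ^ (min s (1 - s) / r)| ^ (1 / min s (1 - s))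

section Means

variable {s r x y X Y : ℝ}

theorem M0_mul_M0 {a b c d : ℝ} (ha : 0 ≤ a) (hb : 0 ≤ b) (hc : 0 ≤ c) (hd : 0 ≤ d) :
    M0 s a b * M0 s c d = M0 s (a * c) (b * d) := by
  simp only [M0, mul_rpow ha hc, mul_rpow hb hd]
  ring

theorem M_pos (hs0 : 0 ≤ s) (hs1 : s ≤ 1) (hx : 0 < x) (hy : 0 < y) : 0 < M s r x y := by
  have hmin : 0 < min (x ^ r) (y ^ r) := lt_min (rpow_pos_of_pos hx r) (rpow_pos_of_pos hy r)
  have h1 := mul_le_mul_of_nonneg_left (min_le_left (x ^ r) (y ^ r)) (sub_nonneg.2 hs1)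
  have h2 := mul_le_mul_of_nonneg_left (min_le_right (x ^ r) (y ^ r)) hs0
  exact rpow_pos_of_pos (by linarith) _

theorem M0_rpow_rpow (hX : 0 ≤ X) (hY : 0 ≤ Y) :
    M0 s (X ^ r) (Y ^ r) = (X ^ (1 - s) * Y ^ s) ^ r := by
  rw [M0, mul_rpow (rpow_nonneg hX _) (rpow_nonneg hY _), ← rpow_mul hX, ← rpow_mul hY,
    ← rpow_mul hX, ← rpow_mul hY, mul_comm r, mul_comm r]

theorem M_one_div_rpow_rpow (hr : r ≠ 0) (hX : 0 ≤ X) (hY : 0 ≤ Y) :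
    M s (1 / r) (X ^ r) (Y ^ r) = ((1 - s) * X + s * Y) ^ r := by
  simp only [M, one_div, rpow_rpow_inv hX hr, rpow_rpow_inv hY hr, inv_inv]

theorem M_neg_one_div_rpow_rpow (hr : r ≠ 0) (hs0 : 0 ≤ s) (hs1 : s ≤ 1) (hX : 0 < X)
    (hY : 0 < Y) :
    M s (-1 / r) (X ^ r) (Y ^ r) = (X * Y / ((1 - s) * Y + s * X)) ^ r := by
  have hinv : ∀ {Z : ℝ}, 0 < Z → (Z ^ r) ^ (-1 / r) = Z⁻¹ := fun hZ => by
    rw [← rpow_mul hZ.le, mul_div_cancel₀ _ hr, rpow_neg_one]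
  have hbase : (1 - s) * X⁻¹ + s * Y⁻¹ = ((1 - s) * Y + s * X) / (X * Y) := by
    field_simp
  have hA : 0 ≤ (1 - s) * Y + s * X := by nlinarith
  rw [M, hinv hX, hinv hY, hbase, one_div_div, div_neg, div_one, rpow_neg (by positivity),
    ← inv_rpow (by positivity), inv_div]

theorem holderGap_rpow_rpow (hr : r ≠ 0) (hs0 : 0 ≤ s) (hs1 : s ≤ 1) (hX : 0 ≤ X)
    (hY : 0 ≤ Y) :
    holderGap s r (X ^ r) (Y ^ r) =
      r * min s (1 - s) * ((1 - s) * Y + s * X)⁻¹ *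
        |Y ^ min s (1 - s) - X ^ min s (1 - s)| ^ (1 / min s (1 - s)) := by
  have hroot : ∀ {Z : ℝ}, 0 ≤ Z → (Z ^ r) ^ (min s (1 - s) / r) = Z ^ min s (1 - s) :=
    fun hZ => by rw [← rpow_mul hZ, mul_div_cancel₀ _ hr]
  have hA : 0 ≤ (1 - s) * Y + s * X := by nlinarith
  rw [holderGap, M_one_div_rpow_rpow hr hY hX, ← rpow_mul hA, mul_div_cancel₀ _ hr,
    rpow_neg_one, hroot hX, hroot hY]

theorem M_neg_one_div_mul_one_add_holderGap_le_M0 (hr : 1 ≤ r) (hs : 0 < s) (hs1 : s < 1)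
    (hx : 0 < x) (hy : 0 < y) :
    M s (-1 / r) x y * (1 + holderGap s r x y) ≤ M0 s x y := by
  have hr0 : r ≠ 0 := by positivity
  obtain ⟨X, hX, rfl⟩ : ∃ X > 0, x = X ^ r :=
    ⟨x ^ r⁻¹, rpow_pos_of_pos hx _, (rpow_inv_rpow hx.le hr0).symm⟩
  obtain ⟨Y, hY, rfl⟩ : ∃ Y > 0, y = Y ^ r :=
    ⟨y ^ r⁻¹, rpow_pos_of_pos hy _, (rpow_inv_rpow hy.le hr0).symm⟩
  rw [M_neg_one_div_rpow_rpow hr0 hs.le hs1.le hX hY,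
    holderGap_rpow_rpow hr0 hs.le hs1.le hX.le hY.le, M0_rpow_rpow hX.le hY.le]
  set A := (1 - s) * Y + s * X
  set G := X ^ s * Y ^ (1 - s)
  set m := min s (1 - s)
  set E := |Y ^ m - X ^ m| ^ (1 / m)
  have hA : 0 < A := by positivity
  have hG : 0 < G := by positivity
  have hmE : 0 ≤ m * E := mul_nonneg (le_min hs.le (by linarith)) (by positivity)
  have hgap : G + m * E ≤ A := by
    linarith [geom_mean_add_min_mul_abs_rpow_sub_le_arith_mean hs hs1 hX hY]
  have hfactor : X ^ (1 - s) * Y ^ s = X * Y / A * (A / G) := by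
    simp only [G, rpow_sub hX, rpow_sub hY, rpow_one]
    field_simp
  have hbernoulli : 1 + r * m * A⁻¹ * E ≤ (A / G) ^ r := by
    have hgap' : m * A⁻¹ * E ≤ (A - G) / A := by
      rw [mul_right_comm, ← div_eq_mul_inv]
      exact div_le_div_of_nonneg_right (by linarith) hA.le
    have hscaled := mul_le_mul_of_nonneg_left hgap' (by linarith : (0 : ℝ) ≤ r)
    linarith [one_add_mul_sub_div_le_div_rpow hr hG (by linarith : G ≤ A)]
  calc (X * Y / A) ^ r * (1 + r * m * A⁻¹ * E) ≤ (X * Y / A) ^ r * (A / G) ^ r := by gcongr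
    _ = (X ^ (1 - s) * Y ^ s) ^ r := by rw [hfactor, mul_rpow (by positivity) (by positivity)]

theorem holderGap_eq_zero_iff (hr : r ≠ 0) (hs : 0 < s) (hs1 : s < 1) (hx : 0 < x) (hy : 0 < y) :
    holderGap s r x y = 0 ↔ x = y := by
  have hm : 0 < min s (1 - s) := lt_min hs (by linarith)
  have hM := M_pos (r := 1 / r) hs.le hs1.le hy hx
  have hcoeff : r * min s (1 - s) * M s (1 / r) y x ^ (-1 / r) ≠ 0 := by positivity
  rw [holderGap, mul_eq_zero, or_iff_right hcoeff, rpow_eq_zero (abs_nonneg _)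
    (one_div_ne_zero hm.ne'), abs_eq_zero, sub_eq_zero,
    rpow_left_inj hy.le hx.le (div_ne_zero hm.ne' hr), eq_comm]

end Means

/-- Quantitative Hölder inequality, case `p = 0` (Lemma 2.1(ii)). -/
theorem quantitative_holder_p_zero (n : ℕ) (hn : 1 ≤ n) (s a b c d : ℝ)
    (hs : 0 < s) (hs1 : s < 1)
    (ha : 0 < a) (hb : 0 < b) (hc : 0 < c) (hd : 0 < d) :
    (M0 s a b * M0 s c d = M0 s (a * c) (b * d) ∧
      M0 s (a * c) (b * d) ≥
        M s (-1 / n) (a * c) (b * d) *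
          (1 + n * min s (1 - s) * (M s (1 / n) (b * d) (a * c)) ^ (-1 / (n : ℝ)) *
            |(b * d) ^ (min s (1 - s) / n) - (a * c) ^ (min s (1 - s) / n)| ^ (1 / min s (1 - s)))) ∧
    (n * min s (1 - s) * (M s (1 / n) (b * d) (a * c)) ^ (-1 / (n : ℝ)) *
        |(b * d) ^ (min s (1 - s) / n) - (a * c) ^ (min s (1 - s) / n)| ^ (1 / min s (1 - s)) = 0
      ↔ a * c = b * d) := by
  have hn' : (1 : ℝ) ≤ n := by exact_mod_cast hn
  have hx := mul_pos ha hc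
  have hy := mul_pos hb hd
  exact ⟨⟨M0_mul_M0 ha.le hb.le hc.le hd.le,
    M_neg_one_div_mul_one_add_holderGap_le_M0 hn' hs hs1 hx hy⟩,
    holderGap_eq_zero_iff (by positivity) hs hs1 hx hy⟩
end

section
/- Let n ≥ 1 be an integer, s ∈ (0,1), and a, b, c, d > 0. Then M_s^{+∞}(a,b) · M_s^{−1/n}(c,d) ≥ M_s^{−1/n}(ac, bd) · (1 + G), where M_s^{+∞}(a,b) = max(a,b) and G = n·min(s,1−s) · |a^{1/n} − b^{1/n}| / ((ab)^{1/n} (max(c,d))^{1/n}) · (M_s^{−1/n}(ac,bd))^{1/n}. Moreover G = 0 if and only if a = b. -/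
open Real

private lemma core_ineq (n : ℕ) (u v m e : ℝ) (hu : 0 < u) (hv : 0 < v)
    (hm : 0 < m) (he : 0 ≤ e) (key : v + m * e ≤ m * u) :
    v ^ n + n * e * v ^ n / u ≤ m ^ n * u ^ n := by
  have hvmu : v ≤ m * u := by nlinarith
  have h2 : e / u ≤ m * e / v := by
    rw [div_le_div_iff₀ hu hv]
    nlinarith
  have h2' : (n : ℝ) * e * v ^ n / u ≤ (n : ℝ) * (m * e / v) * v ^ n := by
    have hvn : (0:ℝ) ≤ v ^ n := by positivity
    have := mul_le_mul_of_nonneg_left h2 (mul_nonneg (Nat.cast_nonneg n) hvn)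
    calc (n : ℝ) * e * v ^ n / u = (n : ℝ) * v ^ n * (e / u) := by ring
      _ ≤ (n : ℝ) * v ^ n * (m * e / v) := this
      _ = (n : ℝ) * (m * e / v) * v ^ n := by ring
  have h3 : v ^ n * (1 + (n : ℝ) * (m * e / v)) ≤ v ^ n * (1 + m * e / v) ^ n := by
    apply mul_le_mul_of_nonneg_left _ (by positivity)
    apply one_add_mul_le_pow
    have : (0:ℝ) ≤ m * e / v := by positivity
    linarith
  have h4 : v ^ n * (1 + m * e / v) ^ n = (v + m * e) ^ n := by
    rw [← mul_pow]
    congr 1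
    field_simp
  have h5 : (v + m * e) ^ n ≤ (m * u) ^ n := by
    apply pow_le_pow_left₀ (by positivity) key
  have h6 : (m * u) ^ n = m ^ n * u ^ n := mul_pow m u n
  nlinarith [h3, h4, h5, h6, h2']

private lemma M_eq (s : ℝ) (n : ℕ) (hn : n ≠ 0) (hs : 0 < s) (hs1 : s < 1)
    {x y : ℝ} (hx : 0 < x) (hy : 0 < y) :
    M s (-1 / (n : ℝ)) x y
      = (((1 - s) * (x ^ (1 / (n : ℝ)))⁻¹ + s * (y ^ (1 / (n : ℝ)))⁻¹) ^ n)⁻¹ := by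
  have hN : (0:ℝ) < n := by exact_mod_cast Nat.pos_of_ne_zero hn
  have hr : (-1 : ℝ) / n = -(1 / n) := by ring
  have hrx : x ^ ((-1 : ℝ) / n) = (x ^ (1 / (n:ℝ)))⁻¹ := by
    rw [hr, Real.rpow_neg hx.le]
  have hry : y ^ ((-1 : ℝ) / n) = (y ^ (1 / (n:ℝ)))⁻¹ := by
    rw [hr, Real.rpow_neg hy.le]
  have hW : 0 < (1 - s) * (x ^ (1 / (n : ℝ)))⁻¹ + s * (y ^ (1 / (n : ℝ)))⁻¹ := by
    have h1 : (0:ℝ) < x ^ (1 / (n:ℝ)) := Real.rpow_pos_of_pos hx _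
    have h2 : (0:ℝ) < y ^ (1 / (n:ℝ)) := Real.rpow_pos_of_pos hy _
    have : 0 < 1 - s := by linarith
    positivity
  have hinv : (1 : ℝ) / (-1 / n) = -(n : ℝ) := by
    field_simp
  rw [M, hrx, hry, hinv, Real.rpow_neg hW.le, Real.rpow_natCast]

/-- Quantitative Hölder inequality, case `p = +∞` (Lemma 2.1(iii)). -/
theorem quantitative_holder_p_infty (n : ℕ) (hn : 1 ≤ n) (s a b c d : ℝ)
    (hs : 0 < s) (hs1 : s < 1)
    (ha : 0 < a) (hb : 0 < b) (hc : 0 < c) (hd : 0 < d) :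
    (max a b * M s (-1 / n) c d ≥
      M s (-1 / n) (a * c) (b * d) *
        (1 + n * min s (1 - s) * |a ^ (1 / (n : ℝ)) - b ^ (1 / (n : ℝ))| /
            ((a * b) ^ (1 / (n : ℝ)) * (max c d) ^ (1 / (n : ℝ))) *
          (M s (-1 / n) (a * c) (b * d)) ^ (1 / (n : ℝ)))) ∧
    (n * min s (1 - s) * |a ^ (1 / (n : ℝ)) - b ^ (1 / (n : ℝ))| /
        ((a * b) ^ (1 / (n : ℝ)) * (max c d) ^ (1 / (n : ℝ))) *
      (M s (-1 / n) (a * c) (b * d)) ^ (1 / (n : ℝ)) = 0 ↔ a = b) := by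
  have hn0 : n ≠ 0 := by omega
  have hN : (0:ℝ) < n := by exact_mod_cast Nat.pos_of_ne_zero hn0
  have hs' : 0 < 1 - s := by linarith
  set α := a ^ (1 / (n : ℝ)) with hα
  set β := b ^ (1 / (n : ℝ)) with hβ
  set γ := c ^ (1 / (n : ℝ)) with hγ
  set δ := d ^ (1 / (n : ℝ)) with hδ
  have hαp : 0 < α := Real.rpow_pos_of_pos ha _
  have hβp : 0 < β := Real.rpow_pos_of_pos hb _
  have hγp : 0 < γ := Real.rpow_pos_of_pos hc _
  have hδp : 0 < δ := Real.rpow_pos_of_pos hd _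
  have haα : α ^ n = a := by rw [hα, one_div]; exact Real.rpow_inv_natCast_pow ha.le hn0
  have hbβ : β ^ n = b := by rw [hβ, one_div]; exact Real.rpow_inv_natCast_pow hb.le hn0
  -- rewrite the means
  have hMcd : M s (-1 / n) c d = (((1 - s) * γ⁻¹ + s * δ⁻¹) ^ n)⁻¹ :=
    M_eq s n hn0 hs hs1 hc hd
  have hab_rpow : (a * b) ^ (1 / (n : ℝ)) = α * β := Real.mul_rpow ha.le hb.le
  have hac : (a * c) ^ (1 / (n : ℝ)) = α * γ := Real.mul_rpow ha.le hc.le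
  have hbd : (b * d) ^ (1 / (n : ℝ)) = β * δ := Real.mul_rpow hb.le hd.le
  have hMab : M s (-1 / n) (a * c) (b * d)
      = (((1 - s) * (α * γ)⁻¹ + s * (β * δ)⁻¹) ^ n)⁻¹ := by
    rw [M_eq s n hn0 hs hs1 (by positivity) (by positivity), hac, hbd]
  set u := (1 - s) * (α * γ)⁻¹ + s * (β * δ)⁻¹ with hu_def
  set v := (1 - s) * γ⁻¹ + s * δ⁻¹ with hv_def
  have hup : 0 < u := by positivity
  have hvp : 0 < v := by positivity
  have hMpow : (M s (-1 / n) (a * c) (b * d)) ^ (1 / (n : ℝ)) = u⁻¹ := by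
    rw [hMab, one_div, Real.inv_rpow (by positivity),
      Real.pow_rpow_inv_natCast hup.le hn0]
  have hmaxab : max a b = (max α β) ^ n := by
    rcases le_total a b with h | h
    · have hαβ : α ≤ β := Real.rpow_le_rpow ha.le h (by positivity)
      rw [max_eq_right h, max_eq_right hαβ, hbβ]
    · have hβα : β ≤ α := Real.rpow_le_rpow hb.le h (by positivity)
      rw [max_eq_left h, max_eq_left hβα, haα]
  have hmaxcd : (max c d) ^ (1 / (n : ℝ)) = max γ δ := by
    rcases le_total c d with h | h
    · have hγδ : γ ≤ δ := Real.rpow_le_rpow hc.le h (by positivity)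
      rw [max_eq_right h, max_eq_right hγδ]
    · have hδγ : δ ≤ γ := Real.rpow_le_rpow hd.le h (by positivity)
      rw [max_eq_left h, max_eq_left hδγ]
  set m := max α β with hm_def
  have hmp : 0 < m := lt_max_iff.2 (Or.inl hαp)
  have hγδmax : 0 < max γ δ := lt_max_iff.2 (Or.inl hγp)
  set e := min s (1 - s) * |α - β| / (α * β * max γ δ) with he_def
  have hminp : 0 < min s (1 - s) := lt_min hs hs'
  have he : 0 ≤ e := by
    apply div_nonneg (mul_nonneg hminp.le (abs_nonneg _)) (by positivity)
  clear_value α β γ δ u v m e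
  -- key inequality : v + m * e ≤ m * u
  have key : v + m * e ≤ m * u := by
    rcases le_total α β with h | h
    · have hba : (0:ℝ) ≤ β - α := sub_nonneg.2 h
      have hmm : m = β := hm_def.trans (max_eq_right h)
      have habs : |α - β| = β - α := by
        rw [abs_sub_comm, abs_of_nonneg (sub_nonneg.2 h)]
      have u_eq : β * u = v + (1 - s) * (β - α) / (α * γ) := by
        rw [hu_def, hv_def]; field_simp; ring
      have e_eq : β * e = min s (1 - s) * (β - α) / (α * max γ δ) := by
        rw [he_def, habs]; field_simp
      have hle : min s (1 - s) * (β - α) / (α * max γ δ)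
          ≤ (1 - s) * (β - α) / (α * γ) := by
        rw [div_le_div_iff₀ (by positivity) (by positivity)]
        have h1 := min_le_right s (1 - s)
        have h2 := le_max_left γ δ
        gcongr
      rw [hmm]; linarith [u_eq, e_eq, hle]
    · have hba : (0:ℝ) ≤ α - β := sub_nonneg.2 h
      have hmm : m = α := hm_def.trans (max_eq_left h)
      have habs : |α - β| = α - β := abs_of_nonneg (sub_nonneg.2 h)
      have u_eq : α * u = v + s * (α - β) / (β * δ) := by
        rw [hu_def, hv_def]; field_simp; ring
      have e_eq : α * e = min s (1 - s) * (α - β) / (β * max γ δ) := by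
        rw [he_def, habs]; field_simp
      have hle : min s (1 - s) * (α - β) / (β * max γ δ)
          ≤ s * (α - β) / (β * δ) := by
        rw [div_le_div_iff₀ (by positivity) (by positivity)]
        have h1 := min_le_left s (1 - s)
        have h2 := le_max_right γ δ
        gcongr
      rw [hmm]; linarith [u_eq, e_eq, hle]
  have hc2 := core_ineq n u v m e hup hvp hmp he key
  constructor
  · -- the inequality
    rw [ge_iff_le, hMpow, hMcd, hMab, hab_rpow, hmaxcd, hmaxab]
    have hcoef : (n : ℝ) * min s (1 - s) * |α - β| / (α * β * max γ δ)
        = (n : ℝ) * e := by rw [he_def]; ring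
    rw [hcoef]
    have h1 : (u ^ n)⁻¹ * (1 + (n : ℝ) * e * u⁻¹)
        = (v ^ n + (n : ℝ) * e * v ^ n / u) / (u ^ n * v ^ n) := by
      field_simp
    have h2 : m ^ n * (v ^ n)⁻¹ = (m ^ n * u ^ n) / (u ^ n * v ^ n) := by
      field_simp
    rw [h1, h2]
    gcongr
  · -- the iff
    rw [hMpow, hab_rpow, hmaxcd]
    constructor
    · intro h
      by_contra hab
      have hαβ : α ≠ β := by
        intro he'
        exact hab (by rw [← haα, ← hbβ, he'])
      have habs : 0 < |α - β| := abs_pos.2 (sub_ne_zero.2 hαβ)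
      have hpos : 0 < (n : ℝ) * min s (1 - s) * |α - β| / (α * β * max γ δ) * u⁻¹ := by
        apply mul_pos
        · apply div_pos
          · exact mul_pos (mul_pos hN hminp) habs
          · positivity
        · exact inv_pos.2 hup
      linarith
    · intro h
      subst h
      have hαβ : α = β := by rw [hα, hβ]
      rw [hαβ, sub_self, abs_zero]
      simp
end

section
/- Let n ≥ 1 be an integer, s ∈ (0,1), and a, b, c, d > 0. Then M_s^{−1/n}(a,b) · max(c,d) ≥ M_s^{−1/n}(ac, bd) · (1 + G), where G = n·min(s,1−s) · |c^{1/n} − d^{1/n}| / ((cd)^{1/n} (max(a,b))^{1/n}) · (M_s^{−1/n}(ac,bd))^{1/n}. Moreover G = 0 if and only if c = d. -/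
open Real

/-- Auxiliary polynomial inequality: if `y + t ≤ X` with `y > 0`, `t ≥ 0`, then
`y^n (X + n t) ≤ X^{n+1}`. -/
lemma qh_aux_pow (n : ℕ) (y t X : ℝ) (hy : 0 < y) (ht : 0 ≤ t)
    (h : y + t ≤ X) : y ^ n * (X + n * t) ≤ X ^ (n + 1) := by
  induction n with
  | zero => simp
  | succ k ih =>
    have hX : 0 < X := by linarith
    have hyX : y ≤ X := by linarith
    have hpow : y ^ (k + 1) ≤ X ^ (k + 1) := pow_le_pow_left₀ hy.le hyX _
    have hXp : (0 : ℝ) < X ^ (k + 1) := pow_pos hX _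
    have h1 : y * (y ^ k * (X + k * t)) ≤ y * X ^ (k + 1) :=
      mul_le_mul_of_nonneg_left ih hy.le
    have h2 : t * y ^ (k + 1) ≤ t * X ^ (k + 1) :=
      mul_le_mul_of_nonneg_left hpow ht
    have h3 : (y + t) * X ^ (k + 1) ≤ X * X ^ (k + 1) :=
      mul_le_mul_of_nonneg_right h hXp.le
    push_cast
    calc y ^ (k + 1) * (X + ((k : ℝ) + 1) * t)
        = y * (y ^ k * (X + (k : ℝ) * t)) + t * y ^ (k + 1) := by ring
      _ ≤ y * X ^ (k + 1) + t * X ^ (k + 1) := add_le_add h1 h2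
      _ = (y + t) * X ^ (k + 1) := by ring
      _ ≤ X * X ^ (k + 1) := h3
      _ = X ^ (k + 1 + 1) := by ring

/-- Quantitative Hölder inequality, case `p = -1/n` (Lemma 2.1(iv)). -/
theorem quantitative_holder_p_neg_inv (n : ℕ) (hn : 1 ≤ n) (s a b c d : ℝ)
    (hs : 0 < s) (hs1 : s < 1)
    (ha : 0 < a) (hb : 0 < b) (hc : 0 < c) (hd : 0 < d) :
    (M s (-1 / n) a b * max c d ≥
      M s (-1 / n) (a * c) (b * d) *
        (1 + n * min s (1 - s) * |c ^ (1 / (n : ℝ)) - d ^ (1 / (n : ℝ))| /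
            ((c * d) ^ (1 / (n : ℝ)) * (max a b) ^ (1 / (n : ℝ))) *
          (M s (-1 / n) (a * c) (b * d)) ^ (1 / (n : ℝ)))) ∧
    (n * min s (1 - s) * |c ^ (1 / (n : ℝ)) - d ^ (1 / (n : ℝ))| /
        ((c * d) ^ (1 / (n : ℝ)) * (max a b) ^ (1 / (n : ℝ))) *
      (M s (-1 / n) (a * c) (b * d)) ^ (1 / (n : ℝ)) = 0 ↔ c = d) := by
  have hN : (0 : ℝ) < (n : ℝ) := by exact_mod_cast Nat.pos_of_ne_zero (by omega)
  have hNne : (n : ℝ) ≠ 0 := ne_of_gt hN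
  have hexp : (1 : ℝ) / (-1 / (n : ℝ)) = -(n : ℝ) := by
    rw [one_div_div]; ring
  simp only [M, hexp, Real.mul_rpow ha.le hc.le, Real.mul_rpow hb.le hd.le,
    Real.mul_rpow hc.le hd.le]
  set N : ℝ := (n : ℝ) with hNdef
  have hs' : (0 : ℝ) < 1 - s := by linarith
  have hm : 0 < min s (1 - s) := lt_min hs hs'
  have hznp : -1 / N ≤ 0 := by
    rw [neg_div]; exact neg_nonpos.mpr (by positivity)
  -- abbreviations
  set A := a ^ (-1 / N) with hAdef
  set B := b ^ (-1 / N) with hBdef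
  set C := c ^ (-1 / N) with hCdef
  set D := d ^ (-1 / N) with hDdef
  set c1 := c ^ (1 / N) with hc1def
  set d1 := d ^ (1 / N) with hd1def
  set mab := (max a b) ^ (1 / N) with hmabdef
  have hApos : 0 < A := rpow_pos_of_pos ha _
  have hBpos : 0 < B := rpow_pos_of_pos hb _
  have hCpos : 0 < C := rpow_pos_of_pos hc _
  have hDpos : 0 < D := rpow_pos_of_pos hd _
  have hc1pos : 0 < c1 := rpow_pos_of_pos hc _
  have hd1pos : 0 < d1 := rpow_pos_of_pos hd _
  have hab : (0 : ℝ) < max a b := lt_max_of_lt_left ha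
  have hmabpos : 0 < mab := rpow_pos_of_pos hab _
  set S := (1 - s) * A + s * B with hSdef
  set X := (1 - s) * (A * C) + s * (B * D) with hXdef
  have hSpos : 0 < S := by
    have := mul_pos hs' hApos; have := mul_pos hs hBpos
    rw [hSdef]; linarith
  have hXpos : 0 < X := by
    have := mul_pos hs' (mul_pos hApos hCpos)
    have := mul_pos hs (mul_pos hBpos hDpos)
    rw [hXdef]; linarith
  -- rewrite the final rpow factor
  have hXinv : (X ^ (-N)) ^ (1 / N) = X⁻¹ := by
    rw [← Real.rpow_mul hXpos.le, neg_mul, mul_one_div, div_self hNne,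
      Real.rpow_neg_one]
  -- relations between negative and positive powers
  have hCc : C = c1⁻¹ := by
    rw [hCdef, hc1def, neg_div, Real.rpow_neg hc.le]
  have hDd : D = d1⁻¹ := by
    rw [hDdef, hd1def, neg_div, Real.rpow_neg hd.le]
  set mi := (max a b) ^ (-1 / N) with hmidef
  have hmipos : 0 < mi := rpow_pos_of_pos hab _
  have hmi : mi = mab⁻¹ := by
    rw [hmidef, hmabdef, neg_div, Real.rpow_neg hab.le]
  have hmiA : mi ≤ A := Real.rpow_le_rpow_of_nonpos ha (le_max_left a b) hznp
  have hmiB : mi ≤ B := Real.rpow_le_rpow_of_nonpos hb (le_max_right a b) hznp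
  -- the quantity t
  set t := min s (1 - s) * mi * |C - D| with htdef
  have htnonneg : 0 ≤ t := by
    rw [htdef]; positivity
  have habsCD : |C - D| = |c1 - d1| / (c1 * d1) := by
    have h1 : C - D = (d1 - c1) / (c1 * d1) := by
      rw [hCc, hDd]; field_simp
    rw [h1, abs_div, abs_of_pos (mul_pos hc1pos hd1pos), abs_sub_comm]
  -- G in terms of t
  have hG : N * min s (1 - s) * |c1 - d1| / (c1 * d1 * mab) * X⁻¹ = N * t / X := by
    rw [htdef, habsCD, hmi]
    field_simp
  -- lower bound on X
  set mu := (max c d) ^ (-1 / N) with hmudef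
  have hcdmax : (0 : ℝ) < max c d := lt_max_of_lt_left hc
  have hmupos : 0 < mu := rpow_pos_of_pos hcdmax _
  have hXlb : mu * S + t ≤ X := by
    rcases le_total c d with hcd | hcd
    · have hmax : max c d = d := max_eq_right hcd
      have hmuD : mu = D := by rw [hmudef, hmax, hDdef]
      have hDC : D ≤ C := Real.rpow_le_rpow_of_nonpos hc hcd hznp
      have habs : |C - D| = C - D := abs_of_nonneg (by linarith)
      have key : min s (1 - s) * mi * (C - D) ≤ (1 - s) * A * (C - D) := by
        apply mul_le_mul_of_nonneg_right _ (by linarith)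
        exact mul_le_mul (min_le_right _ _) hmiA hmipos.le hs'.le
      have hring : X - D * S = (1 - s) * A * (C - D) := by
        rw [hXdef, hSdef]; ring
      rw [hmuD, htdef, habs]
      linarith
    · have hmax : max c d = c := max_eq_left hcd
      have hmuC : mu = C := by rw [hmudef, hmax, hCdef]
      have hCD : C ≤ D := Real.rpow_le_rpow_of_nonpos hd hcd hznp
      have habs : |C - D| = D - C := by
        rw [abs_sub_comm]; exact abs_of_nonneg (by linarith)
      have key : min s (1 - s) * mi * (D - C) ≤ s * B * (D - C) := by
        apply mul_le_mul_of_nonneg_right _ (by linarith)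
        exact mul_le_mul (min_le_left _ _) hmiB hmipos.le hs.le
      have hring : X - C * S = s * B * (D - C) := by
        rw [hXdef, hSdef]; ring
      rw [hmuC, htdef, habs]
      linarith
  -- translate max c d
  have hmaxcd : mu ^ (-N) = max c d := by
    rw [hmudef, ← Real.rpow_mul hcdmax.le]
    have : -1 / N * -N = 1 := by field_simp
    rw [this, Real.rpow_one]
  set y := mu * S with hydef
  have hypos : 0 < y := mul_pos hmupos hSpos
  have hSmu : S ^ (-N) * max c d = (y ^ n)⁻¹ := by
    rw [← hmaxcd, ← Real.mul_rpow hSpos.le hmupos.le, hydef,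
      mul_comm S mu, Real.rpow_neg (mul_pos hmupos hSpos).le, Real.rpow_natCast]
  have hXn : X ^ (-N) = (X ^ n)⁻¹ := by
    rw [Real.rpow_neg hXpos.le, Real.rpow_natCast]
  constructor
  · -- the main inequality
    rw [ge_iff_le, hXinv, hG, hSmu]
    have key := qh_aux_pow n y t X hypos htnonneg hXlb
    have hstep : X ^ (-N) * (1 + N * t / X) = (X + N * t) / X ^ (n + 1) := by
      have h1 : 1 + N * t / X = (X + N * t) / X := by
        rw [add_div, div_self hXpos.ne']
      rw [hXn, h1, inv_mul_eq_div, div_div, mul_comm X (X ^ n), ← pow_succ]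
    rw [hstep, inv_eq_one_div, div_le_div_iff₀ (by positivity) (by positivity)]
    have : (X + N * t) * y ^ n = y ^ n * (X + (n : ℝ) * t) := by
      rw [hNdef]; ring
    rw [this, one_mul]
    exact key
  · -- the equality case
    rw [hXinv]
    constructor
    · intro h
      have habsne : |c1 - d1| = 0 := by
        by_contra hne
        have habspos : 0 < |c1 - d1| := lt_of_le_of_ne (abs_nonneg _) (Ne.symm hne)
        have hpos : 0 < N * min s (1 - s) * |c1 - d1| / (c1 * d1 * mab) * X⁻¹ := by
          apply mul_pos
          · apply div_pos
            · exact mul_pos (mul_pos hN hm) habspos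
            · positivity
          · exact inv_pos.mpr hXpos
        exact hpos.ne' h
      have hc1d1 : c1 = d1 := by
        have := abs_eq_zero.mp habsne
        linarith
      have hcc : (c1 : ℝ) ^ N = c := by
        rw [hc1def, ← Real.rpow_mul hc.le, one_div_mul_cancel hNne, Real.rpow_one]
      have hdd : (d1 : ℝ) ^ N = d := by
        rw [hd1def, ← Real.rpow_mul hd.le, one_div_mul_cancel hNne, Real.rpow_one]
      rw [← hcc, ← hdd, hc1d1]
    · intro h
      have : c1 = d1 := by rw [hc1def, hd1def, h]
      rw [this]
      simp
end

section
/- Let n ≥ 1 be an integer, s ∈ (0,1), p > 0 with pn ≥ 1, and a, b, c, d > 0, and set p̃ = p/(pn+1). Then M_s^p(a,b) · M_s^{−p̃}(c,d) ≥ M_s^{−1/n}(ac, bd), with equality if and only if a/b = (d/c)^{1/(pn+1)}. -/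
open Real

lemma eq_iff_log_eq {x y : ℝ} (hx : 0 < x) (hy : 0 < y) :
    x = y ↔ Real.log x = Real.log y := by
  constructor
  · rintro rfl; rfl
  · intro h; rw [← Real.exp_log hx, ← Real.exp_log hy, h]

lemma amgm2_le {Q x y : ℝ} (hQ0 : 0 < Q) (hQ1 : Q < 1) (hx : 0 < x) (hy : 0 < y) :
    x ^ Q * y ^ (1 - Q) ≤ Q * x + (1 - Q) * y := by
  have key : (x / y) ^ Q ≤ 1 + Q * (x / y - 1) := by
    have h := _root_.rpow_one_add_le_one_add_mul_self (s := x / y - 1)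
      (by have := div_pos hx hy; linarith) hQ0.le hQ1.le
    have e : 1 + (x / y - 1) = x / y := by ring
    rwa [e] at h
  have hxy : x ^ Q * y ^ (1 - Q) = (x / y) ^ Q * y := by
    rw [Real.div_rpow hx.le hy.le, Real.rpow_sub hy, Real.rpow_one]
    have := (Real.rpow_pos_of_pos hy Q).ne'
    field_simp
  rw [hxy]
  calc (x / y) ^ Q * y ≤ (1 + Q * (x / y - 1)) * y :=
        mul_le_mul_of_nonneg_right key hy.le
    _ = Q * x + (1 - Q) * y := by field_simp; ring

lemma amgm2_lt {Q x y : ℝ} (hQ0 : 0 < Q) (hQ1 : Q < 1) (hx : 0 < x) (hy : 0 < y)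
    (hne : x ≠ y) : x ^ Q * y ^ (1 - Q) < Q * x + (1 - Q) * y := by
  have hz : x / y - 1 ≠ 0 := by
    intro h
    exact hne (by field_simp at h; linarith)
  have key : (x / y) ^ Q < 1 + Q * (x / y - 1) := by
    have h := _root_.rpow_one_add_lt_one_add_mul_self (s := x / y - 1)
      (by have := div_pos hx hy; linarith) hz hQ0 hQ1
    have e : 1 + (x / y - 1) = x / y := by ring
    rwa [e] at h
  have hxy : x ^ Q * y ^ (1 - Q) = (x / y) ^ Q * y := by
    rw [Real.div_rpow hx.le hy.le, Real.rpow_sub hy, Real.rpow_one]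
    have := (Real.rpow_pos_of_pos hy Q).ne'
    field_simp
  rw [hxy]
  calc (x / y) ^ Q * y < (1 + Q * (x / y - 1)) * y :=
        mul_lt_mul_of_pos_right key hy
    _ = Q * x + (1 - Q) * y := by field_simp; ring
lemma core {s Q X1 X2 Y1 Y2 : ℝ} (hs : 0 < s) (hs1 : s < 1) (hQ0 : 0 < Q) (hQ1 : Q < 1)
    (hX1 : 0 < X1) (hX2 : 0 < X2) (hY1 : 0 < Y1) (hY2 : 0 < Y2) :
    (1 - s) * (X1 ^ Q * Y1 ^ (1 - Q)) + s * (X2 ^ Q * Y2 ^ (1 - Q)) ≤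
      ((1 - s) * X1 + s * X2) ^ Q * ((1 - s) * Y1 + s * Y2) ^ (1 - Q) ∧
    ((1 - s) * (X1 ^ Q * Y1 ^ (1 - Q)) + s * (X2 ^ Q * Y2 ^ (1 - Q)) =
      ((1 - s) * X1 + s * X2) ^ Q * ((1 - s) * Y1 + s * Y2) ^ (1 - Q) ↔ X1 * Y2 = X2 * Y1) := by
  have hw1 : 0 < 1 - s := by linarith
  have hSX : 0 < (1 - s) * X1 + s * X2 := add_pos (mul_pos hw1 hX1) (mul_pos hs hX2)
  have hSY : 0 < (1 - s) * Y1 + s * Y2 := add_pos (mul_pos hw1 hY1) (mul_pos hs hY2)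
  set SX := (1 - s) * X1 + s * X2 with hSXdef
  set SY := (1 - s) * Y1 + s * Y2 with hSYdef
  have hT : 0 < SX ^ Q * SY ^ (1 - Q) :=
    mul_pos (Real.rpow_pos_of_pos hSX _) (Real.rpow_pos_of_pos hSY _)
  by_cases h : X1 * Y2 = X2 * Y1
  · -- equality case
    set k := Y1 / X1 with hkdef
    have hk0 : 0 < k := div_pos hY1 hX1
    have hY1' : Y1 = k * X1 := by rw [hkdef]; field_simp
    have hY2' : Y2 = k * X2 := by
      rw [hkdef]; field_simp; linear_combination h
    have key : ∀ x : ℝ, 0 < x → x ^ Q * (k * x) ^ (1 - Q) = k ^ (1 - Q) * x := by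
      intro x hx
      rw [Real.mul_rpow hk0.le hx.le,
        show x ^ Q * (k ^ (1 - Q) * x ^ (1 - Q)) = k ^ (1 - Q) * (x ^ Q * x ^ (1 - Q)) by ring,
        ← Real.rpow_add hx]
      norm_num
    have hSYk : SY = k * SX := by rw [hSYdef, hSXdef, hY1', hY2']; ring
    have hEq : (1 - s) * (X1 ^ Q * Y1 ^ (1 - Q)) + s * (X2 ^ Q * Y2 ^ (1 - Q)) =
        SX ^ Q * SY ^ (1 - Q) := by
      rw [hY1', hY2', key X1 hX1, key X2 hX2, hSYk, key SX hSX]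
      rw [hSXdef]; ring
    exact ⟨le_of_eq hEq, by simp [hEq, h]⟩
  · -- strict case
    have hne1 : X1 / SX ≠ Y1 / SY := by
      intro heq
      apply h
      have h2 : X1 * SY = Y1 * SX := (div_eq_div_iff hSX.ne' hSY.ne').mp heq
      rw [hSXdef, hSYdef] at h2
      have h3 : s * (X1 * Y2) = s * (X2 * Y1) := by linear_combination h2
      exact mul_left_cancel₀ hs.ne' h3
    have e : ∀ x y : ℝ, 0 < x → 0 < y →
        x ^ Q * y ^ (1 - Q) = SX ^ Q * SY ^ (1 - Q) * ((x / SX) ^ Q * (y / SY) ^ (1 - Q)) := by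
      intro x y hx hy
      rw [Real.div_rpow hx.le hSX.le, Real.div_rpow hy.le hSY.le]
      have h1 := (Real.rpow_pos_of_pos hSX Q).ne'
      have h2 := (Real.rpow_pos_of_pos hSY (1 - Q)).ne'
      field_simp
      try ring
    have k1 : X1 ^ Q * Y1 ^ (1 - Q) <
        SX ^ Q * SY ^ (1 - Q) * (Q * (X1 / SX) + (1 - Q) * (Y1 / SY)) := by
      rw [e X1 Y1 hX1 hY1]
      exact mul_lt_mul_of_pos_left
        (amgm2_lt hQ0 hQ1 (div_pos hX1 hSX) (div_pos hY1 hSY) hne1) hT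
    have k2 : X2 ^ Q * Y2 ^ (1 - Q) ≤
        SX ^ Q * SY ^ (1 - Q) * (Q * (X2 / SX) + (1 - Q) * (Y2 / SY)) := by
      rw [e X2 Y2 hX2 hY2]
      exact mul_le_mul_of_nonneg_left
        (amgm2_le hQ0 hQ1 (div_pos hX2 hSX) (div_pos hY2 hSY)) hT.le
    have sum1 : (1 - s) * (SX ^ Q * SY ^ (1 - Q) * (Q * (X1 / SX) + (1 - Q) * (Y1 / SY)))
        + s * (SX ^ Q * SY ^ (1 - Q) * (Q * (X2 / SX) + (1 - Q) * (Y2 / SY)))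
        = SX ^ Q * SY ^ (1 - Q) := by
      have e1 : (1 - s) * (Q * (X1 / SX) + (1 - Q) * (Y1 / SY))
          + s * (Q * (X2 / SX) + (1 - Q) * (Y2 / SY)) = 1 := by
        rw [hSXdef, hSYdef] at *
        field_simp
        ring
      calc (1 - s) * (SX ^ Q * SY ^ (1 - Q) * (Q * (X1 / SX) + (1 - Q) * (Y1 / SY)))
            + s * (SX ^ Q * SY ^ (1 - Q) * (Q * (X2 / SX) + (1 - Q) * (Y2 / SY)))
          = SX ^ Q * SY ^ (1 - Q) * ((1 - s) * (Q * (X1 / SX) + (1 - Q) * (Y1 / SY))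
            + s * (Q * (X2 / SX) + (1 - Q) * (Y2 / SY))) := by ring
        _ = SX ^ Q * SY ^ (1 - Q) := by rw [e1, mul_one]
    have strict : (1 - s) * (X1 ^ Q * Y1 ^ (1 - Q)) + s * (X2 ^ Q * Y2 ^ (1 - Q)) <
        SX ^ Q * SY ^ (1 - Q) := by
      calc (1 - s) * (X1 ^ Q * Y1 ^ (1 - Q)) + s * (X2 ^ Q * Y2 ^ (1 - Q))
          < (1 - s) * (SX ^ Q * SY ^ (1 - Q) * (Q * (X1 / SX) + (1 - Q) * (Y1 / SY)))
            + s * (SX ^ Q * SY ^ (1 - Q) * (Q * (X2 / SX) + (1 - Q) * (Y2 / SY))) :=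
            add_lt_add_of_lt_of_le (mul_lt_mul_of_pos_left k1 hw1)
              (mul_le_mul_of_nonneg_left k2 hs.le)
        _ = SX ^ Q * SY ^ (1 - Q) := sum1
    exact ⟨strict.le, by constructor <;> intro h' <;> [exact absurd h' strict.ne; exact absurd h' h]⟩

/-- Hölder inequality with equality characterization, case `p > 0`, `pn ≥ 1`
(Lemma 2.1(i)). -/
theorem holder_equality_case (n : ℕ) (hn : 1 ≤ n) (s p a b c d : ℝ)
    (hs : 0 < s) (hs1 : s < 1) (hp : 0 < p) (hpn : 1 ≤ p * n)
    (ha : 0 < a) (hb : 0 < b) (hc : 0 < c) (hd : 0 < d) :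
    M s p a b * M s (-(p / (p * n + 1))) c d ≥ M s (-1 / n) (a * c) (b * d) ∧
    (M s p a b * M s (-(p / (p * n + 1))) c d = M s (-1 / n) (a * c) (b * d) ↔
      a / b = (d / c) ^ (1 / (p * n + 1))) := by
  have hN0 : (0:ℝ) < (n : ℝ) := by exact_mod_cast hn
  set N := (n : ℝ) with hNdef
  set q : ℝ := -(p / (p * N + 1)) with hqdef
  set r : ℝ := -1 / N with hrdef
  set Q : ℝ := p * N / (p * N + 1) with hQdef
  have hN' : N ≠ 0 := hN0.ne'
  have hA : 0 < p * N + 1 := by positivity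
  have hA' : p * N + 1 ≠ 0 := hA.ne'
  have hq : q < 0 := by
    have : 0 < p / (p * N + 1) := div_pos hp hA
    rw [hqdef]; linarith
  have hq0 : q ≠ 0 := hq.ne
  have hr : r < 0 := by rw [hrdef]; exact div_neg_of_neg_of_pos (by norm_num) hN0
  have hQ0 : 0 < Q := by rw [hQdef]; exact div_pos (mul_pos hp hN0) hA
  have hQ1 : Q < 1 := by rw [hQdef]; exact (div_lt_one hA).mpr (by linarith)
  have hac : 0 < a * c := mul_pos ha hc
  have hbd : 0 < b * d := mul_pos hb hd
  have hX1 : 0 < (a * c) ^ r := Real.rpow_pos_of_pos hac r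
  have hX2 : 0 < (b * d) ^ r := Real.rpow_pos_of_pos hbd r
  have hY1 : 0 < a ^ p := Real.rpow_pos_of_pos ha p
  have hY2 : 0 < b ^ p := Real.rpow_pos_of_pos hb p
  obtain ⟨hle, hiff⟩ := core (Q := Q) hs hs1 hQ0 hQ1 hX1 hX2 hY1 hY2
  have E1 : ((a * c) ^ r) ^ Q * (a ^ p) ^ (1 - Q) = c ^ q := by
    rw [eq_iff_log_eq (mul_pos (Real.rpow_pos_of_pos hX1 Q) (Real.rpow_pos_of_pos hY1 (1 - Q)))
        (Real.rpow_pos_of_pos hc q),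
      Real.log_mul (Real.rpow_pos_of_pos hX1 Q).ne' (Real.rpow_pos_of_pos hY1 (1 - Q)).ne',
      Real.log_rpow hX1, Real.log_rpow hY1, Real.log_rpow hac, Real.log_rpow ha,
      Real.log_mul ha.ne' hc.ne', Real.log_rpow hc, hqdef, hQdef, hrdef]
    field_simp
    ring
  have E2 : ((b * d) ^ r) ^ Q * (b ^ p) ^ (1 - Q) = d ^ q := by
    rw [eq_iff_log_eq (mul_pos (Real.rpow_pos_of_pos hX2 Q) (Real.rpow_pos_of_pos hY2 (1 - Q)))
        (Real.rpow_pos_of_pos hd q),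
      Real.log_mul (Real.rpow_pos_of_pos hX2 Q).ne' (Real.rpow_pos_of_pos hY2 (1 - Q)).ne',
      Real.log_rpow hX2, Real.log_rpow hY2, Real.log_rpow hbd, Real.log_rpow hb,
      Real.log_mul hb.ne' hd.ne', Real.log_rpow hd, hqdef, hQdef, hrdef]
    field_simp
    ring
  rw [E1, E2] at hle hiff
  have hw1 : 0 < 1 - s := by linarith
  have hS3 : 0 < (1 - s) * c ^ q + s * d ^ q :=
    add_pos (mul_pos hw1 (Real.rpow_pos_of_pos hc q)) (mul_pos hs (Real.rpow_pos_of_pos hd q))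
  have hSX : 0 < (1 - s) * (a * c) ^ r + s * (b * d) ^ r :=
    add_pos (mul_pos hw1 hX1) (mul_pos hs hX2)
  have hSY : 0 < (1 - s) * a ^ p + s * b ^ p :=
    add_pos (mul_pos hw1 hY1) (mul_pos hs hY2)
  have hTX : 0 < ((1 - s) * (a * c) ^ r + s * (b * d) ^ r) ^ Q := Real.rpow_pos_of_pos hSX Q
  have hTY : 0 < ((1 - s) * a ^ p + s * b ^ p) ^ (1 - Q) := Real.rpow_pos_of_pos hSY (1 - Q)
  have hT : 0 < ((1 - s) * (a * c) ^ r + s * (b * d) ^ r) ^ Q *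
      ((1 - s) * a ^ p + s * b ^ p) ^ (1 - Q) := mul_pos hTX hTY
  have E3 : (((1 - s) * (a * c) ^ r + s * (b * d) ^ r) ^ Q *
        ((1 - s) * a ^ p + s * b ^ p) ^ (1 - Q)) ^ (1 / q) =
      ((1 - s) * (a * c) ^ r + s * (b * d) ^ r) ^ (1 / r) *
        ((1 - s) * a ^ p + s * b ^ p) ^ (-(1 / p)) := by
    rw [eq_iff_log_eq (Real.rpow_pos_of_pos hT _)
        (mul_pos (Real.rpow_pos_of_pos hSX _) (Real.rpow_pos_of_pos hSY _)),
      Real.log_rpow hT, Real.log_mul hTX.ne' hTY.ne',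
      Real.log_mul (Real.rpow_pos_of_pos hSX (1 / r)).ne'
        (Real.rpow_pos_of_pos hSY (-(1 / p))).ne',
      Real.log_rpow hSX, Real.log_rpow hSY, Real.log_rpow hSX, Real.log_rpow hSY,
      hqdef, hQdef, hrdef]
    field_simp
    ring
  have prod_eq : ((1 - s) * a ^ p + s * b ^ p) ^ (1 / p) *
      (((1 - s) * (a * c) ^ r + s * (b * d) ^ r) ^ Q *
        ((1 - s) * a ^ p + s * b ^ p) ^ (1 - Q)) ^ (1 / q) =
      ((1 - s) * (a * c) ^ r + s * (b * d) ^ r) ^ (1 / r) := by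
    rw [E3, show ((1 - s) * a ^ p + s * b ^ p) ^ (1 / p) *
        (((1 - s) * (a * c) ^ r + s * (b * d) ^ r) ^ (1 / r) *
          ((1 - s) * a ^ p + s * b ^ p) ^ (-(1 / p))) =
        ((1 - s) * (a * c) ^ r + s * (b * d) ^ r) ^ (1 / r) *
          (((1 - s) * a ^ p + s * b ^ p) ^ (1 / p) *
            ((1 - s) * a ^ p + s * b ^ p) ^ (-(1 / p))) from by ring,
      ← Real.rpow_add hSY, add_neg_cancel, Real.rpow_zero, mul_one]
  have hq' : 1 / q < 0 := one_div_neg.mpr hq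
  have hMp : 0 < ((1 - s) * a ^ p + s * b ^ p) ^ (1 / p) := Real.rpow_pos_of_pos hSY _
  have cond_iff : (a * c) ^ r * b ^ p = (b * d) ^ r * a ^ p ↔
      a / b = (d / c) ^ (1 / (p * N + 1)) := by
    rw [eq_iff_log_eq (mul_pos hX1 hY2) (mul_pos hX2 hY1),
      eq_iff_log_eq (div_pos ha hb) (Real.rpow_pos_of_pos (div_pos hd hc) _),
      Real.log_mul hX1.ne' hY2.ne', Real.log_mul hX2.ne' hY1.ne',
      Real.log_rpow hac, Real.log_rpow hbd, Real.log_rpow ha, Real.log_rpow hb,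
      Real.log_mul ha.ne' hc.ne', Real.log_mul hb.ne' hd.ne',
      Real.log_rpow (div_pos hd hc), Real.log_div ha.ne' hb.ne', Real.log_div hd.ne' hc.ne',
      hrdef]
    constructor <;> intro h'
    · have h2 := congrArg (fun t => N * t) h'
      field_simp at h2
      field_simp
      linarith
    · field_simp at h'
      field_simp
      linarith
  simp only [M]
  constructor
  · calc ((1 - s) * (a * c) ^ r + s * (b * d) ^ r) ^ (1 / r)
        = ((1 - s) * a ^ p + s * b ^ p) ^ (1 / p) *
          (((1 - s) * (a * c) ^ r + s * (b * d) ^ r) ^ Q *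
            ((1 - s) * a ^ p + s * b ^ p) ^ (1 - Q)) ^ (1 / q) := prod_eq.symm
      _ ≤ ((1 - s) * a ^ p + s * b ^ p) ^ (1 / p) *
          ((1 - s) * c ^ q + s * d ^ q) ^ (1 / q) :=
        mul_le_mul_of_nonneg_left (Real.rpow_le_rpow_of_nonpos hS3 hle hq'.le) hMp.le
  · constructor
    · intro heq
      have hS3T : (1 - s) * c ^ q + s * d ^ q =
          ((1 - s) * (a * c) ^ r + s * (b * d) ^ r) ^ Q *
            ((1 - s) * a ^ p + s * b ^ p) ^ (1 - Q) := by
        by_contra hne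
        have hlt := lt_of_le_of_ne hle hne
        have hstrict := Real.rpow_lt_rpow_of_neg hS3 hlt hq'
        have h2 : ((1 - s) * (a * c) ^ r + s * (b * d) ^ r) ^ (1 / r) <
            ((1 - s) * a ^ p + s * b ^ p) ^ (1 / p) *
              ((1 - s) * c ^ q + s * d ^ q) ^ (1 / q) := by
          calc ((1 - s) * (a * c) ^ r + s * (b * d) ^ r) ^ (1 / r)
              = _ := prod_eq.symm
            _ < _ := mul_lt_mul_of_pos_left hstrict hMp
        rw [heq] at h2
        exact lt_irrefl _ h2
      exact cond_iff.mp (hiff.mp hS3T)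
    · intro hcond
      rw [hiff.mpr (cond_iff.mpr hcond)]
      exact prod_eq
end

section
/- Let A ⊆ ℝ be a measurable set and f₁, f₂ : A → [0,∞) be integrable. Then for n ≥ 1 and s ∈ (0,1), ∫_A ((1−s)f₁(x)^{1/n} + s f₂(x)^{1/n})^n dx ≤ ((1−s)(∫_A f₁)^{1/n} + s(∫_A f₂)^{1/n})^n. -/
/-! The left side is `‖(1 - s) f₁ ^ (1/n) + s f₂ ^ (1/n)‖ₙ ^ n` and `‖f ^ (1/n)‖ₙ = (∫ f) ^ (1/n)`,
so the inequality is Minkowski's inequality in `Lⁿ`, `n ≥ 1`, raised to the `n`-th power. -/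

open Real MeasureTheory

open scoped ENNReal

namespace ENNReal

theorem lintegral_rpow_weighted_mean_le {α : Type*} [MeasurableSpace α] {μ : Measure α}
    {f g : α → ℝ≥0∞} (hf : AEMeasurable f μ) (hg : AEMeasurable g μ) (a b : ℝ≥0∞)
    {p : ℝ} (hp : 1 ≤ p) :
    ∫⁻ x, (a * f x ^ p⁻¹ + b * g x ^ p⁻¹) ^ p ∂μ ≤
      (a * (∫⁻ x, f x ∂μ) ^ p⁻¹ + b * (∫⁻ x, g x ∂μ) ^ p⁻¹) ^ p := by
  have hp0 : 0 < p := zero_lt_one.trans_le hp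
  have norm_eq : ∀ {c : ℝ≥0∞} {h : α → ℝ≥0∞}, AEMeasurable h μ →
      (∫⁻ x, (c * h x ^ p⁻¹) ^ p ∂μ) ^ (1 / p) = c * (∫⁻ x, h x ∂μ) ^ p⁻¹ := by
    intro c h hh
    simp_rw [mul_rpow_of_nonneg _ _ hp0.le, rpow_inv_rpow hp0.ne']
    rw [lintegral_const_mul'' _ hh, one_div, mul_rpow_of_nonneg _ _ (inv_nonneg.2 hp0.le),
      rpow_rpow_inv hp0.ne']
  have minkowski := lintegral_Lp_add_le (μ := μ) (f := fun x => a * f x ^ p⁻¹)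
    (g := fun x => b * g x ^ p⁻¹) (by fun_prop) (by fun_prop) hp
  rwa [norm_eq hf, norm_eq hg, one_div, rpow_inv_le_iff hp0] at minkowski

theorem ofReal_rpow_weighted_mean {a b x y p : ℝ} (ha : 0 ≤ a) (hb : 0 ≤ b) (hx : 0 ≤ x)
    (hy : 0 ≤ y) (hp : 0 ≤ p) :
    ENNReal.ofReal ((a * x ^ p⁻¹ + b * y ^ p⁻¹) ^ p) =
      (ENNReal.ofReal a * ENNReal.ofReal x ^ p⁻¹ +
        ENNReal.ofReal b * ENNReal.ofReal y ^ p⁻¹) ^ p := by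
  have hp' : 0 ≤ p⁻¹ := inv_nonneg.2 hp
  have hx_rpow := Real.rpow_nonneg hx p⁻¹
  have hy_rpow := Real.rpow_nonneg hy p⁻¹
  rw [ofReal_rpow_of_nonneg hx hp', ofReal_rpow_of_nonneg hy hp', ← ofReal_mul ha,
    ← ofReal_mul hb, ← ofReal_add (by positivity) (by positivity),
    ofReal_rpow_of_nonneg (by positivity) hp]

end ENNReal

theorem MeasureTheory.integral_rpow_weighted_mean_le {α : Type*} [MeasurableSpace α]
    {μ : Measure α} {f g : α → ℝ} (hf0 : 0 ≤ᵐ[μ] f) (hg0 : 0 ≤ᵐ[μ] g) (hf : Integrable f μ)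
    (hg : Integrable g μ) {a b : ℝ} (ha : 0 ≤ a) (hb : 0 ≤ b) {p : ℝ} (hp : 1 ≤ p) :
    ∫ x, (a * f x ^ p⁻¹ + b * g x ^ p⁻¹) ^ p ∂μ ≤
      (a * (∫ x, f x ∂μ) ^ p⁻¹ + b * (∫ x, g x ∂μ) ^ p⁻¹) ^ p := by
  have hp0 : 0 ≤ p := zero_le_one.trans hp
  have mean_nonneg {x y : ℝ} (hx : 0 ≤ x) (hy : 0 ≤ y) :
      0 ≤ (a * x ^ p⁻¹ + b * y ^ p⁻¹) ^ p := by
    have hx_rpow := Real.rpow_nonneg hx p⁻¹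
    have hy_rpow := Real.rpow_nonneg hy p⁻¹
    positivity
  have hmeas : AEMeasurable (fun x => (a * f x ^ p⁻¹ + b * g x ^ p⁻¹) ^ p) μ := by
    have := hf.aemeasurable; have := hg.aemeasurable; fun_prop
  have hmean0 : 0 ≤ᵐ[μ] fun x => (a * f x ^ p⁻¹ + b * g x ^ p⁻¹) ^ p := by
    filter_upwards [hf0, hg0] with x hx hy using mean_nonneg hx hy
  rw [integral_eq_lintegral_of_nonneg_ae hmean0 hmeas.aestronglyMeasurable]
  refine ENNReal.toReal_le_of_le_ofReal
    (mean_nonneg (integral_nonneg_of_ae hf0) (integral_nonneg_of_ae hg0)) ?_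
  rw [ENNReal.ofReal_rpow_weighted_mean ha hb (integral_nonneg_of_ae hf0)
      (integral_nonneg_of_ae hg0) hp0, ofReal_integral_eq_lintegral_ofReal hf hf0,
    ofReal_integral_eq_lintegral_ofReal hg hg0]
  calc ∫⁻ x, ENNReal.ofReal ((a * f x ^ p⁻¹ + b * g x ^ p⁻¹) ^ p) ∂μ
      = ∫⁻ x, (ENNReal.ofReal a * ENNReal.ofReal (f x) ^ p⁻¹ +
          ENNReal.ofReal b * ENNReal.ofReal (g x) ^ p⁻¹) ^ p ∂μ := by
        refine lintegral_congr_ae ?_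
        filter_upwards [hf0, hg0] with x hx hy
        exact ENNReal.ofReal_rpow_weighted_mean ha hb hx hy hp0
    _ ≤ _ := ENNReal.lintegral_rpow_weighted_mean_le hf.aemeasurable.ennreal_ofReal
        hg.aemeasurable.ennreal_ofReal _ _ hp

theorem integral_mean_le_general (n : ℕ) (hn : 1 ≤ n) (s : ℝ) (hs : 0 < s) (hs1 : s < 1)
    (A : Set ℝ) (hA : MeasurableSet A) (f₁ f₂ : ℝ → ℝ)
    (hf₁0 : ∀ x ∈ A, 0 ≤ f₁ x) (hf₂0 : ∀ x ∈ A, 0 ≤ f₂ x)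
    (hf₁ : IntegrableOn f₁ A) (hf₂ : IntegrableOn f₂ A) :
    ∫ x in A, ((1 - s) * f₁ x ^ (1 / (n : ℝ)) + s * f₂ x ^ (1 / (n : ℝ))) ^ (n : ℕ) ≤
      ((1 - s) * (∫ x in A, f₁ x) ^ (1 / (n : ℝ)) + s * (∫ x in A, f₂ x) ^ (1 / (n : ℝ))) ^ (n : ℕ) := by
  simp_rw [one_div, ← Real.rpow_natCast]
  exact integral_rpow_weighted_mean_le (ae_restrict_of_forall_mem hA hf₁0)
    (ae_restrict_of_forall_mem hA hf₂0) hf₁ hf₂ (by linarith) hs.le (by exact_mod_cast hn)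

/-- Hölder-type integral inequality for the `1/n`-mean. -/
theorem integral_mean_le (n : ℕ) (hn : 1 ≤ n) (s : ℝ) (hs : 0 < s) (hs1 : s < 1)
    (A : Set ℝ) (hA : MeasurableSet A) (f₁ f₂ : ℝ → ℝ)
    (hf₁0 : ∀ x ∈ A, 0 ≤ f₁ x) (hf₂0 : ∀ x ∈ A, 0 ≤ f₂ x)
    (hf₁ : IntegrableOn f₁ A) (hf₂ : IntegrableOn f₂ A)
    (hmean : IntegrableOn (fun x => ((1 - s) * f₁ x ^ (1 / (n : ℝ)) + s * f₂ x ^ (1 / (n : ℝ))) ^ (n : ℕ)) A) :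
    ∫ x in A, ((1 - s) * f₁ x ^ (1 / (n : ℝ)) + s * f₂ x ^ (1 / (n : ℝ))) ^ (n : ℕ) ≤
      ((1 - s) * (∫ x in A, f₁ x) ^ (1 / (n : ℝ)) + s * (∫ x in A, f₂ x) ^ (1 / (n : ℝ))) ^ (n : ℕ) :=
  integral_mean_le_general n hn s hs hs1 A hA f₁ f₂ hf₁0 hf₂0 hf₁ hf₂
end

section
/- Let η : ℝ^n → ℝ be a C² convex function on an open convex set K such that det^{1/n}[(1−s)I_n + s·Hess η(x)] = (1−s) + s·det^{1/n}[Hess η(x)] for all x ∈ K and det[Hess η(x)] = c > 0 is constant on K, for some fixed s ∈ (0,1). Then Hess η(x) = c^{1/n}·I_n for every x ∈ K, so ∇η(x) = c^{1/n}x + x₀ on K for some fixed x₀ ∈ ℝ^n (K connected). -/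
/-!
Convexity makes `Hess η(x)` positive semidefinite, and since its determinant is `c > 0` its
eigenvalues `λᵢ` are positive. In an eigenbasis the Minkowski equality reads
`(∏ᵢ (1 - s + s λᵢ))^{1/n} = 1 - s + s (∏ᵢ λᵢ)^{1/n}`, which after taking logarithms is the
equality case of Jensen's inequality for the strictly convex function `t ↦ log (1 - s + s eᵗ)`
at the points `log λᵢ`. Hence every `λᵢ` equals `c^{1/n}` and `D²η = c^{1/n} ⟪·, ·⟫` on `K`;
on the connected open set `K` this makes `Dη - c^{1/n} ⟪·, ·⟫`, and so `∇η - c^{1/n} • id`,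
constant.
-/

open Real Matrix

/-- The Hessian matrix of `η` at `x`, via the second iterated Fréchet derivative. -/
noncomputable def hess {n : ℕ} (η : EuclideanSpace ℝ (Fin n) → ℝ)
    (x : EuclideanSpace ℝ (Fin n)) : Matrix (Fin n) (Fin n) ℝ :=
  Matrix.of fun i j =>
    iteratedFDeriv ℝ 2 η x ![EuclideanSpace.single i (1 : ℝ), EuclideanSpace.single j (1 : ℝ)]

open Finset Topology

theorem Real.strictConvexOn_log_one_sub_add_mul_exp {s : ℝ} (hs : 0 < s) (hs1 : s < 1) :
    StrictConvexOn ℝ Set.univ fun t => log (1 - s + s * exp t) := by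
  have hpos : ∀ t, 0 < 1 - s + s * exp t := fun t => by
    have := exp_pos t
    nlinarith
  have hderiv : deriv (fun t => log (1 - s + s * exp t)) =
      fun t => 1 - (1 - s) / (1 - s + s * exp t) := by
    funext t
    rw [((((hasDerivAt_exp t).const_mul s).const_add (1 - s)).log (hpos t).ne').deriv]
    have := (hpos t).ne'
    field_simp
    ring
  refine StrictMono.strictConvexOn_univ_of_deriv
    (continuous_const.add (continuous_const.mul continuous_exp) |>.log fun t => (hpos t).ne') ?_
  rw [hderiv]
  intro a b hab
  have hpos_a := hpos a
  have hexp := exp_lt_exp.2 hab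
  dsimp only
  gcongr

theorem Real.eq_prod_rpow_of_rpow_prod_one_sub_add_mul_eq {ι : Type*} [Fintype ι] [Nonempty ι]
    {s : ℝ} (hs : 0 < s) (hs1 : s < 1) {l : ι → ℝ} (hl : ∀ i, 0 < l i)
    (heq : (∏ i, (1 - s + s * l i)) ^ (1 / (Fintype.card ι : ℝ)) =
      1 - s + s * (∏ i, l i) ^ (1 / (Fintype.card ι : ℝ))) (i : ι) :
    l i = (∏ j, l j) ^ (1 / (Fintype.card ι : ℝ)) := by
  set w : ℝ := 1 / (Fintype.card ι : ℝ)
  have hw : 0 < w := by positivity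
  have hw_sum : ∑ _j : ι, w = 1 := by simp [w]
  have hfac : ∀ j, 0 < 1 - s + s * l j := fun j => by nlinarith [hl j]
  have hmean : ∑ j, w • log (l j) = log ((∏ j, l j) ^ w) := by
    rw [log_rpow (prod_pos fun j _ => hl j), log_prod fun j _ => (hl j).ne', mul_sum]
    rfl
  have hjensen : log (1 - s + s * exp (∑ j, w • log (l j))) =
      ∑ j, w • log (1 - s + s * exp (log (l j))) := by
    rw [hmean, exp_log (rpow_pos_of_pos (prod_pos fun j _ => hl j) _), ← heq,
      log_rpow (prod_pos fun j _ => hfac j), log_prod fun j _ => (hfac j).ne', mul_sum]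
    simp only [exp_log (hl _), smul_eq_mul]
  have := ((strictConvexOn_log_one_sub_add_mul_exp hs hs1).map_sum_eq_iff (fun j _ => hw) hw_sum
    (fun j _ => Set.mem_univ (log (l j)))).1 hjensen i (mem_univ i)
  rw [hmean] at this
  exact log_injOn_pos (hl i) (rpow_pos_of_pos (prod_pos fun j _ => hl j) _) this

theorem Matrix.PosSemidef.eq_smul_one_of_det_rpow_one_sub_add_smul_eq {ι : Type*} [Fintype ι]
    [DecidableEq ι] {A : Matrix ι ι ℝ} (hA : A.PosSemidef) (hdet : 0 < A.det) {s : ℝ}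
    (hs : 0 < s) (hs1 : s < 1)
    (heq : ((1 - s) • (1 : Matrix ι ι ℝ) + s • A).det ^ (1 / (Fintype.card ι : ℝ)) =
      1 - s + s * A.det ^ (1 / (Fintype.card ι : ℝ))) :
    A = A.det ^ (1 / (Fintype.card ι : ℝ)) • 1 := by
  obtain hι | hι := isEmpty_or_nonempty ι
  · ext i; exact isEmptyElim i
  set l := hA.isHermitian.eigenvalues
  set φ := Unitary.conjStarAlgAut ℝ (Matrix ι ι ℝ) hA.isHermitian.eigenvectorUnitary
  have hspec : A = φ (diagonal l) := by
    simpa only [RCLike.ofReal_real_eq_id, Function.id_comp] using hA.isHermitian.spectral_theorem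
  have hdetA : A.det = ∏ i, l i := by simpa using hA.isHermitian.det_eq_prod_eigenvalues
  have hl : ∀ i, 0 < l i := by
    intro i
    refine (hA.eigenvalues_nonneg i).lt_of_ne fun h => hdet.ne' ?_
    rw [hdetA]
    exact prod_eq_zero (mem_univ i) h.symm
  have hdetM : ((1 - s) • (1 : Matrix ι ι ℝ) + s • A).det = ∏ i, (1 - s + s * l i) := by
    rw [hspec, ← map_one φ, ← map_smul, ← map_smul, ← map_add, det_map, smul_one_eq_diagonal,
      ← diagonal_smul, diagonal_add, det_diagonal]
    rfl
  rw [hdetM, hdetA] at heq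
  have hconst : l = fun _ => A.det ^ (1 / (Fintype.card ι : ℝ)) := by
    rw [hdetA]
    exact funext (Real.eq_prod_rpow_of_rpow_prod_one_sub_add_mul_eq hs hs1 hl heq)
  calc A = φ (diagonal l) := hspec
    _ = φ (A.det ^ (1 / (Fintype.card ι : ℝ)) • 1) := by rw [hconst, smul_one_eq_diagonal]
    _ = A.det ^ (1 / (Fintype.card ι : ℝ)) • 1 := by rw [map_smul, map_one]

theorem ContinuousLinearMap.apply_apply_eq_dotProduct_mulVec {ι : Type*} [Fintype ι]
    [DecidableEq ι] (B : EuclideanSpace ℝ ι →L[ℝ] EuclideanSpace ℝ ι →L[ℝ] ℝ)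
    (v w : EuclideanSpace ℝ ι) :
    B v w = v.ofLp ⬝ᵥ
      (Matrix.of fun i j => B (EuclideanSpace.single i 1) (EuclideanSpace.single j 1)) *ᵥ
        w.ofLp := by
  set b := (EuclideanSpace.basisFun ι ℝ).toBasis
  have hrepr (u : EuclideanSpace ℝ ι) : RingHom.id ℝ ∘ b.repr u = u.ofLp := by ext; simp [b]
  have hmat : LinearMap.toMatrix₂ b b (toLinearMap₁₂ B) =
      Matrix.of fun i j => B (EuclideanSpace.single i 1) (EuclideanSpace.single j 1) := by
    ext; simp [b, LinearMap.toMatrix₂_apply]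
  rw [← hrepr, ← hrepr, ← hmat]
  exact apply_eq_dotProduct_toMatrix₂_mulVec b b (toLinearMap₁₂ B) v w

theorem ConvexOn.fderiv_fderiv_apply_self_nonneg {E : Type*} [NormedAddCommGroup E]
    [NormedSpace ℝ E] {K : Set E} {f : E → ℝ} {x : E} (hf : ConvexOn ℝ K f) (hK : K ∈ 𝓝 x)
    (hf2 : ContDiffAt ℝ 2 f x) (v : E) : 0 ≤ fderiv ℝ (fderiv ℝ f) x v v := by
  -- Near `0`, `t ↦ f (x + t • v)` is convex with derivative `t ↦ Df(x + t • v) v`, which is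
  -- therefore monotone; its own derivative at `0` is `D²f(x) v v`.
  set γ : ℝ →ᵃ[ℝ] E := AffineMap.lineMap x (x + v)
  have hγ (t : ℝ) : HasDerivAt γ v t := by
    simpa using AffineMap.hasDerivAt_lineMap (a := x) (b := x + v) (x := t)
  have hγ0 : γ 0 = x := AffineMap.lineMap_apply_zero _ _
  have hnear : ∀ᶠ t in 𝓝 (0 : ℝ), γ t ∈ K ∧ DifferentiableAt ℝ f (γ t) := by
    have hx : ∀ᶠ y in 𝓝 (γ 0), y ∈ K ∧ DifferentiableAt ℝ f y := hγ0 ▸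
      (Filter.eventually_mem_set.2 hK).and
        ((hf2.eventually (by simp)).mono fun y hy => hy.differentiableAt two_ne_zero)
    exact (hγ 0).continuousAt.eventually hx
  obtain ⟨ε, hε, hball⟩ := Metric.eventually_nhds_iff_ball.1 hnear
  have hderiv (t : ℝ) (ht : t ∈ Metric.ball 0 ε) :
      HasDerivAt (f ∘ γ) (fderiv ℝ f (γ t) v) t :=
    (hball t ht).2.hasFDerivAt.comp_hasDerivAt t (hγ t)
  have hmono : MonotoneOn (fun t => fderiv ℝ f (γ t) v) (Metric.ball 0 ε) := by
    intro a ha b hb hab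
    have hconv := (hf.comp_affineMap γ).subset (fun t ht => (hball t ht).1) (convex_ball 0 ε)
    have := hconv.monotoneOn_deriv (fun t ht => (hderiv t ht).differentiableAt) ha hb hab
    rwa [(hderiv a ha).deriv, (hderiv b hb).deriv] at this
  have hB : HasFDerivAt (fderiv ℝ f) (fderiv ℝ (fderiv ℝ f) x) (γ 0) :=
    hγ0 ▸ ((hf2.fderiv_right le_rfl).differentiableAt one_ne_zero).hasFDerivAt
  have h2 : HasDerivAt (fun t => fderiv ℝ f (γ t) v) (fderiv ℝ (fderiv ℝ f) x v v) 0 :=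
    ((ContinuousLinearMap.apply ℝ ℝ v).hasFDerivAt.comp _ hB).comp_hasDerivAt 0 (hγ 0)
  have hacc : AccPt (0 : ℝ) (Filter.principal (Metric.ball 0 ε)) := by
    simpa using (PerfectSpace.univ_preperfect 0 (Set.mem_univ _)).nhds_inter
      (Metric.ball_mem_nhds 0 hε)
  exact h2.hasDerivWithinAt.nonneg_of_monotoneOn hacc hmono

theorem exists_gradient_eq_smul_add {F : Type*} [NormedAddCommGroup F] [InnerProductSpace ℝ F]
    [CompleteSpace F] {K : Set F} (hK : IsOpen K) (hKc : IsPreconnected K) {f : F → ℝ} {a : ℝ}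
    (hf : ∀ x ∈ K, HasFDerivAt (fderiv ℝ f) (a • innerSL ℝ) x) :
    ∃ x₀ : F, ∀ x ∈ K, gradient f x = a • x + x₀ := by
  have hlin (x : F) : HasFDerivAt (fun y => a • innerSL ℝ y) (a • innerSL ℝ) x :=
    (innerSL ℝ).hasFDerivAt.const_smul a
  obtain ⟨φ, hφ⟩ := hK.exists_eq_add_of_fderiv_eq hKc
    (fun x hx => (hf x hx).differentiableAt.differentiableWithinAt)
    (fun x _ => (hlin x).differentiableAt.differentiableWithinAt)
    (fun x hx => (hf x hx).fderiv.trans (hlin x).fderiv.symm)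
  refine ⟨(InnerProductSpace.toDual ℝ F).symm φ, fun x hx => ?_⟩
  apply (InnerProductSpace.toDual ℝ F).injective
  ext y
  simp [toDual_gradient, hφ hx]

section Hessian

variable {n : ℕ} {η : EuclideanSpace ℝ (Fin n) → ℝ} {x : EuclideanSpace ℝ (Fin n)}

theorem hess_eq_of_fderiv_fderiv :
    hess η x = Matrix.of fun i j =>
      fderiv ℝ (fderiv ℝ η) x (EuclideanSpace.single i 1) (EuclideanSpace.single j 1) := by
  ext i j
  simp [hess, iteratedFDeriv_two_apply]

theorem fderiv_fderiv_apply_eq_dotProduct_hess_mulVec (v w : EuclideanSpace ℝ (Fin n)) :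
    fderiv ℝ (fderiv ℝ η) x v w = v.ofLp ⬝ᵥ hess η x *ᵥ w.ofLp := by
  rw [hess_eq_of_fderiv_fderiv]
  exact ContinuousLinearMap.apply_apply_eq_dotProduct_mulVec _ v w

theorem posSemidef_hess {K : Set (EuclideanSpace ℝ (Fin n))} (hη : ConvexOn ℝ K η)
    (hK : K ∈ 𝓝 x) (h2 : ContDiffAt ℝ 2 η x) : (hess η x).PosSemidef := by
  rw [Matrix.posSemidef_iff_dotProduct_mulVec]
  refine ⟨?_, fun y => ?_⟩
  · ext i j
    simp [hess_eq_of_fderiv_fderiv, (h2.isSymmSndFDerivAt (by simp)).eq]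
  · have := hη.fderiv_fderiv_apply_self_nonneg hK h2 (WithLp.toLp 2 y)
    rwa [fderiv_fderiv_apply_eq_dotProduct_hess_mulVec, ← star_trivial y] at this

theorem fderiv_fderiv_eq_smul_innerSL_of_hess_eq {a : ℝ} (h : hess η x = a • 1) :
    fderiv ℝ (fderiv ℝ η) x = a • innerSL ℝ := by
  refine ContinuousLinearMap.ext fun v => ContinuousLinearMap.ext fun w => ?_
  rw [fderiv_fderiv_apply_eq_dotProduct_hess_mulVec, h]
  simp only [smul_mulVec, one_mulVec, dotProduct_smul, smul_eq_mul, _root_.smul_apply]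
  rw [innerSL_apply_apply, EuclideanSpace.inner_eq_star_dotProduct, star_trivial, dotProduct_comm]

end Hessian

theorem hessian_homothety_general (n : ℕ) (s c : ℝ) (hs : 0 < s) (hs1 : s < 1)
    (hc : 0 < c) (K : Set (EuclideanSpace ℝ (Fin n))) (hK : IsOpen K) (hKconv : Convex ℝ K)
    (η : EuclideanSpace ℝ (Fin n) → ℝ) (hsm : ContDiffOn ℝ 2 η K)
    (hconv : ConvexOn ℝ K η)
    (hdet : ∀ x ∈ K,
      ((1 - s) • (1 : Matrix (Fin n) (Fin n) ℝ) + s • hess η x).det ^ (1 / (n : ℝ)) =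
        (1 - s) + s * (hess η x).det ^ (1 / (n : ℝ)))
    (hconst : ∀ x ∈ K, (hess η x).det = c) :
    (∀ x ∈ K, hess η x = c ^ (1 / (n : ℝ)) • (1 : Matrix (Fin n) (Fin n) ℝ)) ∧
    ∃ x₀ : EuclideanSpace ℝ (Fin n), ∀ x ∈ K,
      gradient η x = c ^ (1 / (n : ℝ)) • x + x₀ := by
  have h2 (x : EuclideanSpace ℝ (Fin n)) (hx : x ∈ K) : ContDiffAt ℝ 2 η x :=
    hsm.contDiffAt (hK.mem_nhds hx)
  have hhess (x : EuclideanSpace ℝ (Fin n)) (hx : x ∈ K) :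
      hess η x = c ^ (1 / (n : ℝ)) • (1 : Matrix (Fin n) (Fin n) ℝ) := by
    have hpsd := posSemidef_hess hconv (hK.mem_nhds hx) (h2 x hx)
    have := hpsd.eq_smul_one_of_det_rpow_one_sub_add_smul_eq ((hconst x hx).symm ▸ hc) hs hs1
      (by simpa using hdet x hx)
    rwa [hconst x hx, Fintype.card_fin] at this
  refine ⟨hhess, exists_gradient_eq_smul_add hK hKconv.isPreconnected fun x hx => ?_⟩
  rw [← fderiv_fderiv_eq_smul_innerSL_of_hess_eq (hhess x hx)]
  exact (((h2 x hx).fderiv_right le_rfl).differentiableAt one_ne_zero).hasFDerivAt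

/-- Equality in the Minkowski determinant inequality for `(1-s)Iₙ + s Hess η`,
together with a constant determinant, forces `Hess η = c^{1/n} Iₙ` and
`∇η(x) = c^{1/n} x + x₀`. -/
theorem hessian_homothety (n : ℕ) (hn : 1 ≤ n) (s c : ℝ) (hs : 0 < s) (hs1 : s < 1)
    (hc : 0 < c) (K : Set (EuclideanSpace ℝ (Fin n))) (hK : IsOpen K) (hKconv : Convex ℝ K)
    (η : EuclideanSpace ℝ (Fin n) → ℝ) (hsm : ContDiffOn ℝ 2 η K)
    (hconv : ConvexOn ℝ K η)
    (hdet : ∀ x ∈ K,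
      ((1 - s) • (1 : Matrix (Fin n) (Fin n) ℝ) + s • hess η x).det ^ (1 / (n : ℝ)) =
        (1 - s) + s * (hess η x).det ^ (1 / (n : ℝ)))
    (hconst : ∀ x ∈ K, (hess η x).det = c) :
    (∀ x ∈ K, hess η x = c ^ (1 / (n : ℝ)) • (1 : Matrix (Fin n) (Fin n) ℝ)) ∧
    ∃ x₀ : EuclideanSpace ℝ (Fin n), ∀ x ∈ K,
      gradient η x = c ^ (1 / (n : ℝ)) • x + x₀ :=
  hessian_homothety_general n s c hs hs1 hc K hK hKconv η hsm hconv hdet hconst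
end
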